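/- arXiv:2511.05027 — 3 statements merged into one kernel-verified Lean document; each statement's English description precedes it below -/
import Mathlib

section
/- For every real α > 2, the series ∑_{i=2}^∞ Γ(1+α/2)·Γ(i)/Γ(i+α/2) converges and equals 2/(α−2). -/
open Real Filter Finset Topology

/-- Lower bound `Γ(x + t) ≥ Γ(x) * (x-1)^t` for `x ≥ 2`, `0 < t`,
via log-convexity of `Γ`. -/
lemma gamma_add_ge (x t : ℝ) (hx : 2 ≤ x) (ht : 0 < t) :
    Real.Gamma x * (x - 1) ^ t ≤ Real.Gamma (x + t) := by
  have hx1 : (0:ℝ) < x - 1 := by linarith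
  have hx0 : (0:ℝ) < x := by linarith
  have hconv := Real.convexOn_log_Gamma
  have hslope := hconv.slope_mono_adjacent (x := x - 1) (y := x) (z := x + t)
    (by simpa using hx1) (by simp; linarith) (by linarith) (by linarith)
  simp only [Function.comp_apply] at hslope
  have hxx : x - (x - 1) = 1 := by ring
  have hyy : x + t - x = t := by ring
  rw [hxx, hyy, div_one] at hslope
  have h1 : Real.log (Real.Gamma x) - Real.log (Real.Gamma (x - 1)) = Real.log (x - 1) := by
    have e : Real.Gamma x = (x - 1) * Real.Gamma (x - 1) := by
      rw [show x = (x - 1) + 1 by ring, Real.Gamma_add_one (ne_of_gt hx1)]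
      ring_nf
    rw [e, Real.log_mul (ne_of_gt hx1) (ne_of_gt (Real.Gamma_pos_of_pos hx1))]
    ring
  rw [h1] at hslope
  have key : Real.log (Real.Gamma x) + t * Real.log (x - 1) ≤
      Real.log (Real.Gamma (x + t)) := by
    have := (le_div_iff₀ ht).mp hslope
    linarith
  have hexp := Real.exp_le_exp.mpr key
  rw [Real.exp_add, Real.exp_log (Real.Gamma_pos_of_pos hx0),
    Real.exp_log (Real.Gamma_pos_of_pos (by linarith))] at hexp
  calc Real.Gamma x * (x - 1) ^ t
      = Real.Gamma x * Real.exp (t * Real.log (x - 1)) := by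
        rw [Real.rpow_def_of_pos hx1, mul_comm (Real.log (x-1)) t]
    _ ≤ Real.Gamma (x + t) := hexp

/-- For `α > 2`, the series `∑_{i=2}^∞ Γ(1+α/2)·Γ(i)/Γ(i+α/2)` converges and
equals `2/(α−2)` (the mean interference-to-average-signal ratio `MISR_∞`). -/
theorem stmt_4 (α : ℝ) (hα : 2 < α) :
    HasSum (fun i : ℕ =>
        Real.Gamma (1 + α / 2) * Real.Gamma ((i : ℝ) + 2) / Real.Gamma ((i : ℝ) + 2 + α / 2))
      (2 / (α - 2)) := by
  set s : ℝ := α / 2 with hs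
  have hs1 : 1 < s := by rw [hs]; linarith
  have hs0 : 0 < s := by linarith
  set C : ℝ := Real.Gamma (1 + s) / (s - 1) with hC
  set g : ℕ → ℝ := fun n => C * (Real.Gamma ((n : ℝ) + 2) / Real.Gamma ((n : ℝ) + 1 + s))
    with hg
  have hGpos : ∀ x : ℝ, 0 < x → 0 < Real.Gamma x := fun x hx => Real.Gamma_pos_of_pos hx
  have hfnn : ∀ i : ℕ, 0 ≤ Real.Gamma (1 + s) * Real.Gamma ((i : ℝ) + 2) /
      Real.Gamma ((i : ℝ) + 2 + s) := by
    intro i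
    have h1 := hGpos (1 + s) (by linarith)
    have h2 := hGpos ((i:ℝ) + 2) (by positivity)
    have h3 := hGpos ((i:ℝ) + 2 + s) (by positivity)
    positivity
  rw [hasSum_iff_tendsto_nat_of_nonneg hfnn]
  have htel : ∀ i : ℕ, Real.Gamma (1 + s) * Real.Gamma ((i : ℝ) + 2) /
      Real.Gamma ((i : ℝ) + 2 + s) = g i - g (i + 1) := by
    intro i
    have hx2 : (0:ℝ) < (i:ℝ) + 2 := by positivity
    have hx1s : (0:ℝ) < (i:ℝ) + 1 + s := by positivity
    have e1 : Real.Gamma ((i:ℝ) + 2 + s) = ((i:ℝ) + 1 + s) * Real.Gamma ((i:ℝ) + 1 + s) := by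
      rw [show (i:ℝ) + 2 + s = ((i:ℝ) + 1 + s) + 1 by ring,
        Real.Gamma_add_one (ne_of_gt hx1s)]
    have e2 : Real.Gamma ((i:ℝ) + 3) = ((i:ℝ) + 2) * Real.Gamma ((i:ℝ) + 2) := by
      rw [show (i:ℝ) + 3 = ((i:ℝ) + 2) + 1 by ring, Real.Gamma_add_one (ne_of_gt hx2)]
    have hcast : ((i + 1 : ℕ) : ℝ) = (i : ℝ) + 1 := by push_cast; ring
    rw [hg]
    simp only [hcast]
    have e3 : ((i:ℝ) + 1 + 2) = (i:ℝ) + 3 := by ring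
    have e4 : ((i:ℝ) + 1 + 1 + s) = (i:ℝ) + 2 + s := by ring
    rw [e3, e4, e1, e2, hC]
    have hG1s := hGpos (1 + s) (by linarith)
    have hG2 := hGpos ((i:ℝ)+2) hx2
    have hG1ss := hGpos ((i:ℝ)+1+s) hx1s
    have hsne : s - 1 ≠ 0 := by intro h; linarith
    field_simp
    ring
  have hsum : ∀ n : ℕ, ∑ i ∈ Finset.range n,
      Real.Gamma (1 + s) * Real.Gamma ((i : ℝ) + 2) / Real.Gamma ((i : ℝ) + 2 + s)
      = g 0 - g n := by
    intro n
    rw [Finset.sum_congr rfl fun i _ => htel i]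
    exact Finset.sum_range_sub' g n
  simp only [hsum]
  have hg0 : g 0 = 2 / (α - 2) := by
    rw [hg]
    simp only [Nat.cast_zero]
    rw [show (0:ℝ) + 1 + s = 1 + s by ring, show (0:ℝ) + 2 = 2 by ring]
    rw [Real.Gamma_two, hC]
    have hG1s := hGpos (1 + s) (by linarith)
    have hsne : s - 1 ≠ 0 := by intro h; linarith
    have hα2 : α - 2 ≠ 0 := by intro h; linarith
    field_simp
    rw [hs]; ring
  rw [hg0]
  have hgto : Tendsto g atTop (𝓝 0) := by
    have hbound : ∀ n : ℕ, Real.Gamma ((n:ℝ) + 2) / Real.Gamma ((n:ℝ) + 1 + s)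
        ≤ ((n:ℝ) + 1) ^ (-(s - 1)) := by
      intro n
      have h := gamma_add_ge ((n:ℝ) + 2) (s - 1) (by simp) (by linarith)
      rw [show (n:ℝ) + 2 + (s - 1) = (n:ℝ) + 1 + s by ring,
        show (n:ℝ) + 2 - 1 = (n:ℝ) + 1 by ring] at h
      have hG2 := hGpos ((n:ℝ)+2) (by positivity)
      have hG1s := hGpos ((n:ℝ)+1+s) (by positivity)
      have hp : (0:ℝ) < ((n:ℝ) + 1) ^ (s - 1) := by positivity
      rw [Real.rpow_neg (by positivity), ← one_div, div_le_div_iff₀ hG1s hp]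
      linarith
    have hto : Tendsto (fun n : ℕ => ((n:ℝ) + 1) ^ (-(s - 1))) atTop (𝓝 0) := by
      have h1 : Tendsto (fun n : ℕ => (n:ℝ) + 1) atTop atTop :=
        tendsto_atTop_add_const_right _ 1 tendsto_natCast_atTop_atTop
      exact (tendsto_rpow_neg_atTop (by linarith)).comp h1
    have hratio : Tendsto (fun n : ℕ => Real.Gamma ((n:ℝ) + 2) / Real.Gamma ((n:ℝ) + 1 + s))
        atTop (𝓝 0) := by
      apply squeeze_zero (fun n => ?_) hbound hto
      have hG2 := hGpos ((n:ℝ)+2) (by positivity)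
      have hG1s := hGpos ((n:ℝ)+1+s) (by positivity)
      positivity
    have := hratio.const_mul C
    simpa [hg] using this
  have hfin := (tendsto_const_nhds (x := g 0)).sub hgto
  rw [hg0, sub_zero] at hfin
  exact hfin
end

section
/- For every real α > 2 and every real x ≥ 0: e^{−x} · ∑_{k=0}^∞ x^k·(2k+α)/[(1+α/2)_k·(α−2)] = (α/(α−2))·F₁(x) + (4x/(α²−4))·F₂(x), where F_n(x) = ∑_{m=0}^∞ [(α/2)_m/(n+α/2)_m]·(−x)^m/m! and (a)_m = Γ(a+m)/Γ(a) is the Pochhammer symbol. -/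
/-!
Write `a = α/2`. Since `(1+a)_k = (a)_k (a+k)/a`, the left side is `α/(α-2) · e^{-x} ₁F₁(1; a; x)`.
Kummer's transformation turns `e^{-x} ₁F₁(1; a; x)` into `₁F₁(a-1; a; -x)`, whose coefficients
`(a-1)/(a+n-1)` are read off the Cauchy product with the exponential series, by induction on `n`
using `(a)_{l+1} = a (a+1)_l`. Finally `(a-1)/(a+n-1) = a/(a+n) - n/((a+n-1)(a+n))`: the first part
gives `F₁`, and the second, after an index shift, gives `x/(a(a+1)) · F₂`.
-/

/-- The Pochhammer symbol (rising factorial) `(a)_m = Γ(a+m)/Γ(a)`. -/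
noncomputable def poch (a : ℝ) (m : ℕ) : ℝ := Real.Gamma (a + m) / Real.Gamma a

/-- The confluent hypergeometric series
`F_n(x) = ∑_{m=0}^∞ [(α/2)_m/(n+α/2)_m]·(−x)^m/m!`. -/
noncomputable def Fhyp (α : ℝ) (n : ℕ) (x : ℝ) : ℝ :=
  ∑' m : ℕ, poch (α / 2) m / poch ((n : ℝ) + α / 2) m * (-x) ^ m / (m.factorial : ℝ)

open Finset Real Nat

section Pochhammer

variable {a : ℝ} {n : ℕ}

lemma poch_zero (ha : 0 < a) : poch a 0 = 1 := by
  simp [poch, (Gamma_pos_of_pos ha).ne']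

lemma poch_pos (ha : 0 < a) : 0 < poch a n :=
  div_pos (Gamma_pos_of_pos (by positivity)) (Gamma_pos_of_pos ha)

lemma poch_succ (h : a + n ≠ 0) : poch a (n + 1) = poch a n * (a + n) := by
  rw [poch, poch, Nat.cast_succ, ← add_assoc, Gamma_add_one h]
  ring

lemma poch_succ_left (ha : a ≠ 0) : poch a (n + 1) = a * poch (a + 1) n := by
  rw [poch, poch, Gamma_add_one ha, Nat.cast_succ, add_comm (n : ℝ), add_assoc]
  field_simp

lemma poch_one_add (ha : 0 < a) : poch (1 + a) n = poch a n * (a + n) / a := by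
  rw [eq_div_iff ha.ne', ← poch_succ (by positivity), poch_succ_left ha.ne', add_comm 1 a, mul_comm]

lemma factorial_le_poch (ha : 1 ≤ a) : (n ! : ℝ) ≤ poch a n := by
  induction n with
  | zero => simp [poch_zero (by linarith : (0 : ℝ) < a)]
  | succ n ih =>
    rw [poch_succ (by positivity), Nat.factorial_succ, Nat.cast_mul, mul_comm]
    gcongr
    · exact (poch_pos (by linarith)).le
    · push_cast
      linarith

end Pochhammer

section Kummer

variable {a : ℝ}

lemma sum_antidiagonal_pow_div_factorial_mul_pow_div_poch (ha : 1 < a) (x : ℝ) (n : ℕ) :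
    ∑ p ∈ antidiagonal n, (-x) ^ p.1 / p.1 ! * (x ^ p.2 / poch a p.2)
      = (a - 1) / (a + n - 1) * ((-x) ^ n / n !) := by
  induction n generalizing a with
  | zero => simp [poch_zero (by linarith : 0 < a), div_self (by linarith : a - 1 ≠ 0)]
  | succ n ih =>
    have hshift : ∀ l : ℕ, x ^ (l + 1) / poch a (l + 1) = x / a * (x ^ l / poch (a + 1) l) := by
      intro l
      rw [poch_succ_left (by linarith), pow_succ]
      field_simp
    simp only [sum_antidiagonal_succ', hshift, mul_left_comm _ (x / a), ← mul_sum,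
      ih (by linarith : 1 < a + 1), poch_zero (by linarith : 0 < a)]
    have : a + n ≠ 0 := by positivity
    push_cast [Nat.factorial_succ]
    rw [show a + 1 - 1 = a by ring, show a + 1 + (n : ℝ) - 1 = a + n by ring,
      show a + ((n : ℝ) + 1) - 1 = a + n by ring]
    field_simp
    ring

lemma summable_norm_pow_div_poch (ha : 1 ≤ a) (x : ℝ) :
    Summable fun k : ℕ => ‖x ^ k / poch a k‖ := by
  refine (summable_pow_div_factorial |x|).of_nonneg_of_le (fun _ => norm_nonneg _) fun k => ?_
  rw [norm_div, norm_pow, Real.norm_eq_abs, Real.norm_of_nonneg (poch_pos (by linarith)).le]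
  gcongr
  exact factorial_le_poch ha

theorem exp_neg_mul_tsum_pow_div_poch (ha : 1 < a) (x : ℝ) :
    exp (-x) * ∑' k : ℕ, x ^ k / poch a k
      = ∑' n : ℕ, (a - 1) / (a + n - 1) * ((-x) ^ n / n !) := by
  have hexp : Summable fun k : ℕ => ‖(-x) ^ k / (k ! : ℝ)‖ := by
    simpa [norm_div, norm_pow] using summable_pow_div_factorial |x|
  rw [exp_eq_exp_ℝ, ← (NormedSpace.expSeries_div_hasSum_exp (-x)).tsum_eq,
    tsum_mul_tsum_eq_tsum_sum_antidiagonal_of_summable_norm hexp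
      (summable_norm_pow_div_poch ha.le x)]
  simp only [sum_antidiagonal_pow_div_factorial_mul_pow_div_poch ha]

end Kummer

lemma summable_mul_pow_div_factorial {c : ℕ → ℝ} {C : ℝ} (hc : ∀ n, |c n| ≤ C) (x : ℝ) :
    Summable fun n : ℕ => c n * (x ^ n / n !) := by
  refine Summable.of_norm_bounded ((summable_pow_div_factorial |x|).mul_left C) fun n => ?_
  rw [norm_mul, norm_div, norm_pow, Real.norm_eq_abs, Real.norm_eq_abs, RCLike.norm_natCast]
  gcongr
  exact hc n

section Contiguous

variable {a : ℝ}

lemma hasSum_kummer_contiguous (ha : 1 < a) (x : ℝ) :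
    HasSum (fun n : ℕ => (a - 1) / (a + n - 1) * ((-x) ^ n / n !))
      ((∑' n : ℕ, a / (a + n) * ((-x) ^ n / n !)) + x / (a * (a + 1)) *
        ∑' n : ℕ, a * (a + 1) / ((a + n) * (a + n + 1)) * ((-x) ^ n / n !)) := by
  have hpos : ∀ n : ℕ, 0 < a + n := fun n => by positivity
  have h₁ := (summable_mul_pow_div_factorial (c := fun n : ℕ => a / (a + n)) (C := 1)
    (fun n => by
      rw [abs_of_pos (by have := hpos n; positivity), div_le_one (hpos n)]
      linarith [(n.cast_nonneg : (0 : ℝ) ≤ n)]) (-x)).hasSum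
  have h₂ := (summable_mul_pow_div_factorial
    (c := fun n : ℕ => a * (a + 1) / ((a + n) * (a + n + 1))) (C := 1)
    (fun n => by
      have := hpos n
      rw [abs_of_pos (by positivity), div_le_one (by positivity)]
      nlinarith [(n.cast_nonneg : (0 : ℝ) ≤ n)]) (-x)).hasSum
  have hd : HasSum (fun n : ℕ => -(n / ((a + n - 1) * (a + n))) * ((-x) ^ n / n !))
      (x / (a * (a + 1)) * ∑' n : ℕ, a * (a + 1) / ((a + n) * (a + n + 1)) * ((-x) ^ n / n !)) := by
    refine (hasSum_nat_add_iff' 1).mp ?_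
    simp only [range_one, sum_singleton, CharP.cast_eq_zero, zero_div, neg_zero, zero_mul,
      sub_zero]
    refine (h₂.mul_left (x / (a * (a + 1)))).congr_fun fun n => ?_
    have := hpos n
    push_cast [Nat.factorial_succ]
    rw [show a + ((n : ℝ) + 1) - 1 = a + n by ring]
    field_simp
    ring
  refine (h₁.add hd).congr_fun fun n => ?_
  have := hpos n
  have : a + n - 1 ≠ 0 := by linarith [(n.cast_nonneg : (0 : ℝ) ≤ n)]
  field_simp
  ring

end Contiguous

section Fhyp

variable {α : ℝ}

lemma Fhyp_one_eq (hα : 0 < α) (x : ℝ) :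
    Fhyp α 1 x = ∑' m : ℕ, α / 2 / (α / 2 + m) * ((-x) ^ m / m !) := by
  refine tsum_congr fun m => ?_
  have : 0 < α / 2 + m := by positivity
  have := poch_pos (n := m) (by positivity : 0 < α / 2)
  rw [Nat.cast_one, poch_one_add (by positivity)]
  field_simp

lemma Fhyp_two_eq (hα : 0 < α) (x : ℝ) :
    Fhyp α 2 x
      = ∑' m : ℕ, α / 2 * (α / 2 + 1) / ((α / 2 + m) * (α / 2 + m + 1)) * ((-x) ^ m / m !) := by
  refine tsum_congr fun m => ?_
  have : 0 < α / 2 + m := by positivity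
  have := poch_pos (n := m) (by positivity : 0 < α / 2)
  rw [Nat.cast_ofNat, show (2 : ℝ) + α / 2 = 1 + (1 + α / 2) by ring, poch_one_add (by positivity),
    poch_one_add (by positivity)]
  field_simp
  ring

end Fhyp

theorem stmt_8_general (α x : ℝ) (hα : 2 < α) :
    Real.exp (-x) *
        ∑' k : ℕ, x ^ k * (2 * (k : ℝ) + α) / (poch (1 + α / 2) k * (α - 2))
      = α / (α - 2) * Fhyp α 1 x + 4 * x / (α ^ 2 - 4) * Fhyp α 2 x := by
  have ha : 1 < α / 2 := by linarith
  have hseries : ∑' k : ℕ, x ^ k * (2 * (k : ℝ) + α) / (poch (1 + α / 2) k * (α - 2))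
      = α / (α - 2) * ∑' k : ℕ, x ^ k / poch (α / 2) k := by
    rw [← tsum_mul_left]
    refine tsum_congr fun k => ?_
    have : 0 < α / 2 + k := by positivity
    have := poch_pos (n := k) (by positivity : 0 < α / 2)
    have : α - 2 ≠ 0 := by linarith
    rw [poch_one_add (by positivity)]
    field_simp
    ring
  rw [hseries, mul_left_comm, exp_neg_mul_tsum_pow_div_poch ha,
    (hasSum_kummer_contiguous ha x).tsum_eq, Fhyp_one_eq (by linarith), Fhyp_two_eq (by linarith),
    mul_add, ← mul_assoc]
  congr 2
  have : α - 2 ≠ 0 := by linarith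
  have : α ^ 2 - 4 ≠ 0 := by nlinarith
  field_simp
  ring

/-- Combination of two instances of Kummer's transformation: for `α > 2` and `x ≥ 0`,
`e^{−x}·∑_{k=0}^∞ x^k(2k+α)/[(1+α/2)_k(α−2)] = (α/(α−2))·F₁(x) + (4x/(α²−4))·F₂(x)`. -/
theorem stmt_8 (α x : ℝ) (hα : 2 < α) (hx : 0 ≤ x) :
    Real.exp (-x) *
        ∑' k : ℕ, x ^ k * (2 * (k : ℝ) + α) / (poch (1 + α / 2) k * (α - 2))
      = α / (α - 2) * Fhyp α 1 x + 4 * x / (α ^ 2 - 4) * Fhyp α 2 x :=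
  stmt_8_general α x hα
end

section
/- Let M be a positive integer, let X be a real random variable with cumulative distribution function F(x) = 1 − ∑_{k=0}^{M−1} (Mx)^k·e^{−Mx}/k! for x ≥ 0 and F(x) = 0 for x < 0 (i.e., X ~ Gamma(M, 1/M)), and let Y be a nonnegative random variable independent of X with E[Y^M] < ∞. Then lim_{θ → 0⁺} P(X < θ·Y)/θ^M = (M^{M−1}/(M−1)!)·E[Y^M]. -/
/-! Conditioning on `Y` turns `P(X < θY)` into `E[F(θY)]`, where `F` is the cdf of `X`
(continuous, so `<` and `≤` give the same probability). For `x ≥ 0` the Taylor expansion of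
`exp` squeezes `e^{-Mx} (Mx)^M / M! ≤ F(x) ≤ (Mx)^M / M!`, so `F(θy)/θ^M → M^M y^M / M!` with
the integrable majorant `M^M Y^M / M!`; dominated convergence gives the limit, and
`M^M / M! = M^{M-1} / (M-1)!`. -/

open MeasureTheory ProbabilityTheory Real Filter Set Topology Finset

namespace Real

theorem pow_div_factorial_le_exp_sub_sum {x : ℝ} (hx : 0 ≤ x) (n : ℕ) :
    x ^ n / n.factorial ≤ exp x - ∑ k ∈ range n, x ^ k / k.factorial := by
  have := sum_le_exp_of_nonneg hx (n + 1)
  rw [sum_range_succ] at this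
  linarith

theorem exp_sub_sum_le_pow_div_factorial_mul_exp {x : ℝ} (hx : 0 ≤ x) (n : ℕ) :
    exp x - ∑ k ∈ range n, x ^ k / k.factorial ≤ x ^ n / n.factorial * exp x := by
  have hexp : HasSum (fun k : ℕ => x ^ k / k.factorial) (exp x) := by
    simpa [exp_eq_exp_ℝ] using NormedSpace.expSeries_div_hasSum_exp (𝔸 := ℝ) x
  refine hasSum_le (fun k => ?_) ((hasSum_nat_add_iff' n).mpr hexp) (hexp.mul_left _)
  have hfac : (n.factorial * k.factorial : ℝ) ≤ (k + n).factorial := by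
    exact_mod_cast Nat.le_of_dvd (Nat.factorial_pos _)
      (add_comm n k ▸ Nat.factorial_mul_factorial_dvd_factorial_add n k)
  calc x ^ (k + n) / (k + n).factorial
      ≤ x ^ (k + n) / (n.factorial * k.factorial) := by gcongr
    _ = x ^ n / n.factorial * (x ^ k / k.factorial) := by rw [pow_add]; field_simp

end Real

theorem tendsto_integral_comp_mul_div_pow {Ω : Type*} [MeasurableSpace Ω] {μ : Measure Ω}
    {F : ℝ → ℝ} (hF : Measurable F) {n : ℕ} {c C : ℝ}
    (hle : ∀ x, 0 ≤ x → |F x| ≤ C * x ^ n)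
    (hlim : ∀ y, 0 ≤ y → Tendsto (fun θ => F (θ * y) / θ ^ n) (𝓝[>] 0) (𝓝 (c * y ^ n)))
    {Y : Ω → ℝ} (hY : AEMeasurable Y μ) (hYnn : ∀ᵐ ω ∂μ, 0 ≤ Y ω)
    (hint : Integrable (fun ω => Y ω ^ n) μ) :
    Tendsto (fun θ => (∫ ω, F (θ * Y ω) ∂μ) / θ ^ n) (𝓝[>] 0) (𝓝 (c * ∫ ω, Y ω ^ n ∂μ)) := by
  simp_rw [← integral_div, ← integral_const_mul]
  refine tendsto_integral_filter_of_dominated_convergence (fun ω => C * Y ω ^ n)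
    (Eventually.of_forall fun θ => ?_) ?_ (hint.const_mul C) ?_
  · exact ((hF.comp_aemeasurable (hY.const_mul θ)).div_const _).aestronglyMeasurable
  · filter_upwards [self_mem_nhdsWithin] with θ (hθ : 0 < θ)
    filter_upwards [hYnn] with ω hω
    rw [norm_div, norm_pow, Real.norm_of_nonneg hθ.le, Real.norm_eq_abs,
      div_le_iff₀ (by positivity)]
    calc |F (θ * Y ω)| ≤ C * (θ * Y ω) ^ n := hle _ (by positivity)
      _ = C * Y ω ^ n * θ ^ n := by ring
  · filter_upwards [hYnn] with ω hω using hlim _ hω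

theorem measureReal_Iio_eq_cdf {ν : Measure ℝ} [IsProbabilityMeasure ν] {t : ℝ}
    (ht : ContinuousAt (cdf ν) t) : ν.real (Iio t) = cdf ν t := by
  have hIio := (cdf ν).measure_Iio (tendsto_cdf_atBot ν) t
  rw [measure_cdf, sub_zero,
    ((monotone_cdf ν).continuousWithinAt_Iio_iff_leftLim_eq).mp ht.continuousWithinAt] at hIio
  rw [measureReal_def, hIio, ENNReal.toReal_ofReal (cdf_nonneg ν t)]

theorem monotone_measure_Iio (ν : Measure ℝ) : Monotone fun t => ν (Iio t) :=
  fun _ _ hst => measure_mono (Iio_subset_Iio hst)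

namespace ProbabilityTheory

variable {Ω β : Type*} [MeasurableSpace Ω] [MeasurableSpace β] {μ : Measure Ω}
  {X : Ω → ℝ} {Y : Ω → β} {g : β → ℝ}

theorem IndepFun.measure_lt_comp_eq_lintegral [IsFiniteMeasure μ] (hX : AEMeasurable X μ)
    (hY : AEMeasurable Y μ) (hXY : IndepFun X Y μ) (hg : Measurable g) :
    μ {ω | X ω < g (Y ω)} = ∫⁻ ω, μ.map X (Iio (g (Y ω))) ∂μ := by
  have hs : MeasurableSet {p : ℝ × β | p.1 < g p.2} :=
    measurableSet_lt measurable_fst (hg.comp measurable_snd)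
  calc μ {ω | X ω < g (Y ω)} = μ.map (fun ω => (X ω, Y ω)) {p | p.1 < g p.2} :=
        (Measure.map_apply_of_aemeasurable (hX.prodMk hY) hs).symm
    _ = ∫⁻ b, μ.map X (Iio (g b)) ∂(μ.map Y) := by
        rw [(indepFun_iff_map_prod_eq_prod_map_map hX hY).mp hXY, Measure.prod_apply_symm hs]
        rfl
    _ = ∫⁻ ω, μ.map X (Iio (g (Y ω))) ∂μ :=
        lintegral_map' (measurable_measure_prodMk_right hs).aemeasurable hY

theorem IndepFun.measureReal_lt_comp_eq_integral_cdf [IsProbabilityMeasure μ]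
    (hX : AEMeasurable X μ) (hY : AEMeasurable Y μ) (hXY : IndepFun X Y μ) (hg : Measurable g)
    (hcdf : Continuous (cdf (μ.map X))) :
    μ.real {ω | X ω < g (Y ω)} = ∫ ω, cdf (μ.map X) (g (Y ω)) ∂μ := by
  have : IsProbabilityMeasure (μ.map X) := Measure.isProbabilityMeasure_map hX
  rw [measureReal_def, hXY.measure_lt_comp_eq_lintegral hX hY hg, ← integral_toReal]
  · exact integral_congr_ae (ae_of_all _ fun ω => measureReal_Iio_eq_cdf hcdf.continuousAt)
  · exact ((monotone_measure_Iio _).measurable.comp hg).comp_aemeasurable hY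
  · exact ae_of_all _ fun ω => measure_lt_top _ _

end ProbabilityTheory

/-- The cdf of `Gamma(M, 1/M)`, the Erlang law with shape and rate `M`. -/
noncomputable def erlangCDF (M : ℕ) (x : ℝ) : ℝ :=
  if 0 ≤ x then
    1 - ∑ k ∈ Finset.range M, ((M : ℝ) * x) ^ k * Real.exp (-((M : ℝ) * x)) / (k.factorial : ℝ)
  else 0

section Erlang

variable {M : ℕ}

theorem erlangCDF_eq_exp_neg_mul {x : ℝ} (hx : 0 ≤ x) : erlangCDF M x =
    exp (-(M * x)) * (exp (M * x) - ∑ k ∈ range M, (M * x) ^ k / k.factorial) := by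
  rw [erlangCDF, if_pos hx, mul_sub, ← exp_add, neg_add_cancel, exp_zero, mul_sum]
  congr 1
  exact sum_congr rfl fun k _ => by ring

theorem exp_neg_mul_pow_div_factorial_le_erlangCDF {x : ℝ} (hx : 0 ≤ x) :
    exp (-(M * x)) * ((M * x) ^ M / M.factorial) ≤ erlangCDF M x := by
  rw [erlangCDF_eq_exp_neg_mul hx]
  gcongr
  exact pow_div_factorial_le_exp_sub_sum (by positivity) M

theorem erlangCDF_le_pow_div_factorial {x : ℝ} (hx : 0 ≤ x) :
    erlangCDF M x ≤ (M * x) ^ M / M.factorial := by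
  calc erlangCDF M x
      ≤ exp (-(M * x)) * ((M * x) ^ M / M.factorial * exp (M * x)) := by
        rw [erlangCDF_eq_exp_neg_mul hx]
        gcongr
        exact exp_sub_sum_le_pow_div_factorial_mul_exp (by positivity) M
    _ = (M * x) ^ M / M.factorial := by
        rw [mul_left_comm, ← exp_add, neg_add_cancel, exp_zero, mul_one]

theorem erlangCDF_nonneg (x : ℝ) : 0 ≤ erlangCDF M x := by
  rcases le_or_gt 0 x with hx | hx
  · exact (by positivity : (0 : ℝ) ≤ _).trans (exp_neg_mul_pow_div_factorial_le_erlangCDF hx)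
  · rw [erlangCDF, if_neg hx.not_ge]

theorem abs_erlangCDF_le {x : ℝ} (hx : 0 ≤ x) :
    |erlangCDF M x| ≤ (M : ℝ) ^ M / M.factorial * x ^ M := by
  rw [abs_of_nonneg (erlangCDF_nonneg x)]
  exact (erlangCDF_le_pow_div_factorial hx).trans_eq (by ring)

theorem continuous_erlangCDF (hM : 1 ≤ M) : Continuous (erlangCDF M) := by
  refine Continuous.if_le (by fun_prop) continuous_const continuous_const continuous_id
    fun x hx => ?_
  rw [← hx, sum_eq_single_of_mem 0 (mem_range.2 hM) fun k _ hk => by simp [zero_pow hk]]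
  simp

theorem tendsto_erlangCDF_mul_div_pow {y : ℝ} (hy : 0 ≤ y) :
    Tendsto (fun θ => erlangCDF M (θ * y) / θ ^ M) (𝓝[>] 0)
      (𝓝 ((M : ℝ) ^ M / M.factorial * y ^ M)) := by
  have hlimit : (M : ℝ) ^ M / M.factorial * y ^ M = (M * y) ^ M / M.factorial := by ring
  have hlower : Tendsto (fun θ : ℝ => exp (-(M * (θ * y))) * ((M * y) ^ M / M.factorial))
      (𝓝[>] 0) (𝓝 ((M * y) ^ M / M.factorial)) :=
    ((Continuous.tendsto' (by fun_prop) 0 _ (by simp)).mono_left nhdsWithin_le_nhds)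
  rw [hlimit]
  refine tendsto_of_tendsto_of_tendsto_of_le_of_le' hlower tendsto_const_nhds ?_ ?_ <;>
    filter_upwards [self_mem_nhdsWithin] with θ (hθ : 0 < θ)
  · rw [le_div_iff₀ (by positivity)]
    calc exp (-(M * (θ * y))) * ((M * y) ^ M / M.factorial) * θ ^ M
        = exp (-(M * (θ * y))) * ((M * (θ * y)) ^ M / M.factorial) := by ring
      _ ≤ erlangCDF M (θ * y) := exp_neg_mul_pow_div_factorial_le_erlangCDF (by positivity)
  · rw [div_le_iff₀ (by positivity)]
    calc erlangCDF M (θ * y) ≤ (M * (θ * y)) ^ M / M.factorial :=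
          erlangCDF_le_pow_div_factorial (by positivity)
      _ = (M * y) ^ M / M.factorial * θ ^ M := by ring

end Erlang

/-- ASAPPP small-threshold asymptotics: if `X ~ Gamma(M, 1/M)` (Nakagami-`M` channel
power, with cdf `F(x) = 1 − ∑_{k=0}^{M−1} (Mx)^k e^{−Mx}/k!` for `x ≥ 0` and `0` for
`x < 0`) and `Y ≥ 0` is independent of `X` with `E[Y^M] < ∞`, then
`lim_{θ→0⁺} P(X < θY)/θ^M = (M^{M−1}/(M−1)!)·E[Y^M]`. -/
theorem stmt_13 {Ω : Type*} [MeasurableSpace Ω] (μ : Measure Ω) [IsProbabilityMeasure μ]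
    (M : ℕ) (hM : 1 ≤ M) (X Y : Ω → ℝ) (hX : Measurable X) (hY : Measurable Y)
    (hcdf : ∀ x : ℝ,
      (μ {ω | X ω ≤ x}).toReal
        = if 0 ≤ x then
            1 - ∑ k ∈ Finset.range M,
              ((M : ℝ) * x) ^ k * Real.exp (-((M : ℝ) * x)) / (k.factorial : ℝ)
          else 0)
    (hYnn : ∀ ω, 0 ≤ Y ω)
    (hindep : IndepFun X Y μ)
    (hint : Integrable (fun ω => Y ω ^ M) μ) :
    Filter.Tendsto
      (fun θ : ℝ => (μ {ω | X ω < θ * Y ω}).toReal / θ ^ M)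
      (nhdsWithin 0 (Set.Ioi 0))
      (nhds ((M : ℝ) ^ (M - 1) / ((M - 1).factorial : ℝ) * ∫ ω, Y ω ^ M ∂μ)) := by
  have : IsProbabilityMeasure (μ.map X) := Measure.isProbabilityMeasure_map hX.aemeasurable
  have hcdfX : ⇑(cdf (μ.map X)) = erlangCDF M := funext fun x => by
    rw [cdf_eq_real, measureReal_def, Measure.map_apply hX measurableSet_Iic]
    exact hcdf x
  have hprob (θ : ℝ) : (μ {ω | X ω < θ * Y ω}).toReal = ∫ ω, erlangCDF M (θ * Y ω) ∂μ := by
    rw [← hcdfX]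
    exact hindep.measureReal_lt_comp_eq_integral_cdf hX.aemeasurable hY.aemeasurable
      (measurable_const_mul θ) (hcdfX ▸ continuous_erlangCDF hM)
  have hM0 : M ≠ 0 := by omega
  have hconst : (M : ℝ) ^ (M - 1) / ((M - 1).factorial : ℝ) = (M : ℝ) ^ M / M.factorial := by
    rw [← mul_pow_sub_one hM0 (M : ℝ), ← Nat.mul_factorial_pred hM0, Nat.cast_mul,
      mul_div_mul_left _ _ (by positivity)]
  simp_rw [hconst, hprob]
  exact tendsto_integral_comp_mul_div_pow (continuous_erlangCDF hM).measurable
    (fun _ => abs_erlangCDF_le) (fun _ => tendsto_erlangCDF_mul_div_pow) hY.aemeasurable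
    (ae_of_all _ hYnn) hint
end
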